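/- Let α > −1. There exists a twice continuously differentiable function u₂ : (0,∞) → ℝ satisfying u₂''(r) + u₂'(r)/r + 8(1+α)² r^{2α}(1+r^{2+2α})^{−2} u₂(r) = 0 for every r > 0, such that both limits lim_{r→0⁺} u₂(r)/log r and lim_{r→∞} u₂(r)/log r exist and are nonzero. In particular u₂ is comparable to log r near 0 and near ∞, and u₂ is linearly independent from the bounded solution u₁(r) = (1−r^{2+2α})/(1+r^{2+2α}). -/

import Mathlib

/-!
Write `k = 2 + 2α > 0` and `u₁(r) = (1 - r^k)/(1 + r^k)` for the bounded solution. The function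
`u₂(r) = 2 + k log r · u₁(r)` solves the same equation, which is a direct computation once one notes
`r u₁'(r) = -2k r^k/(1 + r^k)²`. Since `u₁ → 1` at `0⁺` and `u₁ → -1` at `∞` while `|log r| → ∞`,
`u₂ / log r` tends to `k` and `-k` respectively. Independence is read off at `r = 1`, where `u₁`
vanishes and `u₂ = 2`, and then at any `r ∈ (0, 1)`, where `u₁ > 0`.
-/

open Filter Topology Real Set

noncomputable section

variable {k r : ℝ}

def bubbleProfile (k r : ℝ) : ℝ := (1 - r ^ k) / (1 + r ^ k)

def logSolution (k r : ℝ) : ℝ := 2 + k * log r * bubbleProfile k r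

def logSolutionDeriv (k r : ℝ) : ℝ :=
  k * bubbleProfile k r / r - 2 * k ^ 2 * r ^ k * log r / (r * (1 + r ^ k) ^ 2)

lemma one_add_rpow_pos (hr : 0 < r) : 0 < 1 + r ^ k := by positivity

lemma hasDerivAt_rpow_const_of_pos (hr : 0 < r) :
    HasDerivAt (fun y : ℝ => y ^ k) (k * r ^ k / r) r := by
  simpa [rpow_sub_one hr.ne', mul_div_assoc] using hasDerivAt_rpow_const (p := k) (Or.inl hr.ne')

lemma hasDerivAt_bubbleProfile (hr : 0 < r) :
    HasDerivAt (bubbleProfile k) (-2 * k * r ^ k / (r * (1 + r ^ k) ^ 2)) r := by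
  have hpow := hasDerivAt_rpow_const_of_pos (k := k) hr
  have hden := (one_add_rpow_pos (k := k) hr).ne'
  refine (((hasDerivAt_const r 1).sub hpow).div ((hasDerivAt_const r 1).add hpow) hden).congr_deriv ?_
  simp only [Pi.add_apply, Pi.sub_apply]
  field_simp
  ring

lemma hasDerivAt_logSolution (hr : 0 < r) :
    HasDerivAt (logSolution k) (logSolutionDeriv k r) r := by
  have hden := (one_add_rpow_pos (k := k) hr).ne'
  refine ((hasDerivAt_const r 2).add (((hasDerivAt_log hr.ne').const_mul k).mul
    (hasDerivAt_bubbleProfile hr))).congr_deriv ?_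
  unfold logSolutionDeriv
  field_simp
  ring

lemma hasDerivAt_logSolutionDeriv (hr : 0 < r) :
    HasDerivAt (logSolutionDeriv k)
      (-logSolutionDeriv k r / r
        - 2 * k ^ 2 * r ^ k / (r ^ 2 * (1 + r ^ k) ^ 2) * logSolution k r) r := by
  have hpow := hasDerivAt_rpow_const_of_pos (k := k) hr
  have hden := (one_add_rpow_pos (k := k) hr).ne'
  have hfirst := ((hasDerivAt_bubbleProfile (k := k) hr).const_mul k).div (hasDerivAt_id r) hr.ne'
  have hnum := (hpow.const_mul (2 * k ^ 2)).mul (hasDerivAt_log hr.ne')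
  have hdenom := (hasDerivAt_id r).mul (((hasDerivAt_const r (1 : ℝ)).add hpow).pow 2)
  refine (hfirst.sub (hnum.div hdenom (mul_pos hr (pow_pos (one_add_rpow_pos hr) 2)).ne')).congr_deriv ?_
  simp only [Pi.add_apply, Pi.mul_apply, Pi.pow_apply, id, logSolutionDeriv,
    logSolution, bubbleProfile]
  field_simp
  ring

lemma contDiffOn_logSolution {n : WithTop ℕ∞} : ContDiffOn ℝ n (logSolution k) (Ioi 0) := by
  intro r (hr : 0 < r)
  have hpow : ContDiffAt ℝ n (fun y : ℝ => y ^ k) r := contDiffAt_rpow_const_of_ne hr.ne'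
  exact (contDiffAt_const.add ((contDiffAt_const.mul (contDiffAt_log.2 hr.ne')).mul
    ((contDiffAt_const.sub hpow).div (contDiffAt_const.add hpow)
      (one_add_rpow_pos hr).ne'))).contDiffWithinAt

lemma logSolution_ode (hr : 0 < r) :
    deriv (deriv (logSolution k)) r + deriv (logSolution k) r / r
      + 2 * k ^ 2 * r ^ k / (r ^ 2 * (1 + r ^ k) ^ 2) * logSolution k r = 0 := by
  have hderiv : deriv (logSolution k) =ᶠ[𝓝 r] logSolutionDeriv k :=
    eventually_of_mem (Ioi_mem_nhds hr) fun _ hs => (hasDerivAt_logSolution hs).deriv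
  rw [hderiv.deriv_eq, (hasDerivAt_logSolutionDeriv hr).deriv, (hasDerivAt_logSolution hr).deriv]
  ring

lemma tendsto_bubbleProfile_nhdsGT_zero (hk : 0 < k) :
    Tendsto (bubbleProfile k) (𝓝[>] 0) (𝓝 1) := by
  have hpow : Tendsto (fun r : ℝ => r ^ k) (𝓝[>] 0) (𝓝 0) := by
    simpa [zero_rpow hk.ne'] using
      (continuousAt_rpow_const 0 k (Or.inr hk.le)).tendsto.mono_left nhdsWithin_le_nhds
  unfold bubbleProfile
  simpa [Pi.div_def] using (tendsto_const_nhds.sub hpow).div (tendsto_const_nhds.add hpow)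
    (by norm_num : (1 : ℝ) + 0 ≠ 0)

lemma tendsto_bubbleProfile_atTop (hk : 0 < k) : Tendsto (bubbleProfile k) atTop (𝓝 (-1)) := by
  have hden : Tendsto (fun r : ℝ => 1 + r ^ k) atTop atTop :=
    tendsto_atTop_add_const_left _ 1 (tendsto_rpow_atTop hk)
  have hlim : Tendsto (fun r : ℝ => 2 / (1 + r ^ k) - 1) atTop (𝓝 (-1)) := by
    simpa using (tendsto_const_nhds (x := (2 : ℝ)).div_atTop hden).sub_const 1
  refine hlim.congr' ?_
  filter_upwards [eventually_gt_atTop 0] with r hr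
  have := (one_add_rpow_pos (k := k) hr).ne'
  unfold bubbleProfile
  field_simp
  ring

lemma tendsto_const_add_mul_log_mul_div_log {l : Filter ℝ} {g : ℝ → ℝ} {L : ℝ} (c a : ℝ)
    (hlog : Tendsto log l (Bornology.cobounded ℝ)) (hg : Tendsto g l (𝓝 L)) :
    Tendsto (fun r => (c + a * log r * g r) / log r) l (𝓝 (a * L)) := by
  have hinv := tendsto_inv₀_cobounded'.comp hlog
  have hlim : Tendsto (fun r => c * (log r)⁻¹ + a * g r) l (𝓝 (a * L)) := by
    simpa using ((tendsto_nhdsWithin_iff.1 hinv).1.const_mul c).add (hg.const_mul a)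
  refine hlim.congr' ?_
  filter_upwards [(tendsto_nhdsWithin_iff.1 hinv).2] with r (hr : (log r)⁻¹ ≠ 0)
  field_simp [inv_eq_zero.not.mp hr]

lemma bubbleProfile_pos (hk : 0 < k) (hr₀ : 0 < r) (hr₁ : r < 1) : 0 < bubbleProfile k r :=
  div_pos (by linarith [rpow_lt_one hr₀.le hr₁ hk]) (one_add_rpow_pos hr₀)

lemma linearIndependent_bubbleProfile_logSolution (hk : 0 < k) {a b : ℝ}
    (h : ∀ r : ℝ, 0 < r → a * bubbleProfile k r + b * logSolution k r = 0) : a = 0 ∧ b = 0 := by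
  have hb : b = 0 := by
    simpa [bubbleProfile, logSolution] using h 1 one_pos
  subst hb
  have ha := h (1 / 2) (by norm_num)
  rw [zero_mul, add_zero] at ha
  exact ⟨(mul_eq_zero.1 ha).resolve_right (bubbleProfile_pos hk (by norm_num) (by norm_num)).ne',
    rfl⟩

end

/-- existence of a second fundamental solution `u₂` of the radial
(frequency-0) homogeneous linearized equation at the standard bubble, which is
comparable to `log r` both near `0` and near `∞`, and linearly independent from
the bounded solution `u₁(r) = (1-r^{2+2α})/(1+r^{2+2α})`. -/
theorem stmt7 (α : ℝ) (hα : α > -1) :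
    ∃ u₂ : ℝ → ℝ, ContDiffOn ℝ 2 u₂ (Set.Ioi 0) ∧
      (∀ r : ℝ, 0 < r →
        deriv (deriv u₂) r + deriv u₂ r / r
          + 8 * (1 + α) ^ 2 * r ^ (2 * α) / (1 + r ^ (2 + 2 * α)) ^ 2 * u₂ r = 0) ∧
      (∃ L : ℝ, L ≠ 0 ∧
        Tendsto (fun r => u₂ r / Real.log r) (nhdsWithin 0 (Set.Ioi 0)) (nhds L)) ∧
      (∃ L : ℝ, L ≠ 0 ∧
        Tendsto (fun r => u₂ r / Real.log r) atTop (nhds L)) ∧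
      (∀ a b : ℝ,
        (∀ r : ℝ, 0 < r →
          a * ((1 - r ^ (2 + 2 * α)) / (1 + r ^ (2 + 2 * α))) + b * u₂ r = 0) →
        a = 0 ∧ b = 0) := by
  have hk : 0 < 2 + 2 * α := by linarith
  refine ⟨logSolution (2 + 2 * α), contDiffOn_logSolution, fun r hr => ?_, ⟨2 + 2 * α, hk.ne', ?_⟩,
    ⟨-(2 + 2 * α), neg_ne_zero.2 hk.ne', ?_⟩, fun a b => linearIndependent_bubbleProfile_logSolution hk⟩
  · have hpow : r ^ (2 * α) = r ^ (2 + 2 * α) / r ^ 2 := by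
      rw [rpow_add hr, rpow_two]
      field_simp
    rw [← logSolution_ode (k := 2 + 2 * α) hr, hpow]
    field_simp
    ring
  · simpa only [logSolution, mul_one] using tendsto_const_add_mul_log_mul_div_log 2 (2 + 2 * α)
      (tendsto_log_nhdsGT_zero.mono_right IsOrderBornology.atBot_le_cobounded)
      (tendsto_bubbleProfile_nhdsGT_zero hk)
  · simpa only [logSolution, mul_neg_one] using tendsto_const_add_mul_log_mul_div_log 2 (2 + 2 * α)
      (tendsto_log_atTop.mono_right IsOrderBornology.atTop_le_cobounded)
      (tendsto_bubbleProfile_atTop hk)
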